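/- arXiv:hep-th/0504169 — 2 statements merged into one kernel-verified Lean document; each statement's English description precedes it below -/
import Mathlib

section
/- The linearized Lovelock tensor G_k^{μν} is symmetric: G_k^{μν} = G_k^{νμ}. -/
/-- Partial derivative of a function on ℝⁿ in the i-th coordinate direction. -/
noncomputable def pd {n : ℕ} (i : Fin n) (f : (Fin n → ℝ) → ℝ) : (Fin n → ℝ) → ℝ :=
  fun x => fderiv ℝ f x (Pi.single i 1)

/-- The linearized Riemann tensor of a symmetric 2-tensor field h on ℝⁿ. -/
noncomputable def Kt {n : ℕ} (h : Fin n → Fin n → (Fin n → ℝ) → ℝ) (a b c d : Fin n) :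
    (Fin n → ℝ) → ℝ :=
  (1/2 : ℝ) • (pd d (pd a (h b c)) - pd d (pd b (h a c)))
    - (1/2 : ℝ) • (pd c (pd a (h b d)) - pd c (pd b (h a d)))

/-- The weight-one generalized Kronecker delta
δ^{μ₁…μ_p}_{ν₁…ν_p} = (1/p!) Σ_{σ∈S_p} sgn(σ) ∏ᵢ δ^{μᵢ}_{ν_{σ(i)}}. -/
noncomputable def gdelta (n p : ℕ) (μ ν : Fin p → Fin n) : ℝ :=
  (1 / (Nat.factorial p : ℝ)) *
    ∑ σ : Equiv.Perm (Fin p),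
      ((Equiv.Perm.sign σ : ℤ) : ℝ) * ∏ i, (if μ i = ν (σ i) then (1 : ℝ) else 0)

/-- The linearized Lovelock scalar of order k:
a_k = δ^{σ₁…σ_{2k}}_{ρ₁…ρ_{2k}} K_{σ₁σ₂}^{ρ₁ρ₂} ⋯ K_{σ_{2k−1}σ_{2k}}^{ρ_{2k−1}ρ_{2k}},
indices raised with the flat (Euclidean) metric, repeated indices summed. -/
noncomputable def lovelockA {n : ℕ} (k : ℕ) (h : Fin n → Fin n → (Fin n → ℝ) → ℝ) :
    (Fin n → ℝ) → ℝ :=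
  ∑ σ : Fin (2 * k) → Fin n, ∑ ρ : Fin (2 * k) → Fin n,
    gdelta n (2 * k) σ ρ •
      ∏ i : Fin k,
        Kt h (σ ⟨2 * i.1, by have := i.2; omega⟩) (σ ⟨2 * i.1 + 1, by have := i.2; omega⟩)
             (ρ ⟨2 * i.1, by have := i.2; omega⟩) (ρ ⟨2 * i.1 + 1, by have := i.2; omega⟩)

/-- The linearized Lovelock tensor
G_k^{μν} = (1/2) δ^{μσ₁…σ_{2k}}_{ν ρ₁…ρ_{2k}} K_{σ₁σ₂}^{ρ₁ρ₂} ⋯ K_{σ_{2k−1}σ_{2k}}^{ρ_{2k−1}ρ_{2k}}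
(indices raised/lowered with the flat metric, repeated indices summed). -/
noncomputable def lovelockG {n : ℕ} (k : ℕ) (h : Fin n → Fin n → (Fin n → ℝ) → ℝ)
    (μ ν : Fin n) : (Fin n → ℝ) → ℝ :=
  (1 / 2 : ℝ) • ∑ σ : Fin (2 * k) → Fin n, ∑ ρ : Fin (2 * k) → Fin n,
    gdelta n (2 * k + 1) (Fin.cons μ σ) (Fin.cons ν ρ) •
      ∏ i : Fin k,
        Kt h (σ ⟨2 * i.1, by have := i.2; omega⟩) (σ ⟨2 * i.1 + 1, by have := i.2; omega⟩)
             (ρ ⟨2 * i.1, by have := i.2; omega⟩) (ρ ⟨2 * i.1 + 1, by have := i.2; omega⟩)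


lemma pd_comm {n : ℕ} (i j : Fin n) (f : (Fin n → ℝ) → ℝ) (hf : ContDiff ℝ (⊤ : ℕ∞) f) :
    pd i (pd j f) = pd j (pd i f) := by
  funext x
  have hd : Differentiable ℝ (fderiv ℝ f) :=
    (hf.fderiv_right (m := (⊤ : ℕ∞)) le_rfl).differentiable (by simp)
  have key : ∀ v w : Fin n → ℝ,
      fderiv ℝ (fun y => fderiv ℝ f y v) x w = fderiv ℝ (fderiv ℝ f) x w v := by
    intro v w
    rw [fderiv_clm_apply (hd x) (differentiableAt_const v)]
    simp
  have hs : IsSymmSndFDerivAt ℝ f x :=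
    (hf.contDiffAt).isSymmSndFDerivAt (by rw [minSmoothness_of_isRCLikeNormedField]; exact WithTop.coe_le_coe.mpr (le_top : (2 : ℕ∞) ≤ ⊤))
  show fderiv ℝ (fun y => fderiv ℝ f y (Pi.single j 1)) x (Pi.single i 1)
      = fderiv ℝ (fun y => fderiv ℝ f y (Pi.single i 1)) x (Pi.single j 1)
  rw [key, key]
  exact hs.eq _ _

lemma Kt_pairSymm {n : ℕ} (h : Fin n → Fin n → (Fin n → ℝ) → ℝ)
    (hsmooth : ∀ μ ν, ContDiff ℝ (⊤ : ℕ∞) (h μ ν))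
    (hsymm : ∀ μ ν, h μ ν = h ν μ) (a b c d : Fin n) :
    Kt h a b c d = Kt h c d a b := by
  unfold Kt
  rw [hsymm d a, hsymm c a, hsymm d b, hsymm c b,
      pd_comm b c (h a d) (hsmooth a d), pd_comm b d (h a c) (hsmooth a c),
      pd_comm a c (h b d) (hsmooth b d), pd_comm a d (h b c) (hsmooth b c)]
  funext x
  simp only [Pi.smul_apply, Pi.sub_apply, smul_eq_mul]
  ring

lemma gdelta_symm (n p : ℕ) (μ ν : Fin p → Fin n) :
    gdelta n p μ ν = gdelta n p ν μ := by
  unfold gdelta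
  congr 1
  refine Fintype.sum_equiv (Equiv.inv (Equiv.Perm (Fin p))) _ _ fun σ => ?_
  simp only [Equiv.inv_apply, Equiv.Perm.sign_inv]
  congr 1
  calc ∏ i, (if μ i = ν (σ i) then (1:ℝ) else 0)
      = ∏ i, (if μ (σ⁻¹ i) = ν (σ (σ⁻¹ i)) then (1:ℝ) else 0) :=
        (Equiv.prod_comp σ⁻¹ fun i => if μ i = ν (σ i) then (1:ℝ) else 0).symm
    _ = ∏ i, (if ν i = μ (σ⁻¹ i) then (1:ℝ) else 0) := by
        refine Finset.prod_congr rfl fun i _ => ?_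
        rw [show σ (σ⁻¹ i) = i from σ.apply_symm_apply i]
        simp [eq_comm]

set_option maxHeartbeats 1000000 in
/-- the linearized Lovelock tensor is symmetric: G_k^{μν} = G_k^{νμ}. -/
theorem lovelock_tensor_symmetric {n : ℕ} (k : ℕ)
    (h : Fin n → Fin n → (Fin n → ℝ) → ℝ)
    (hsmooth : ∀ μ ν, ContDiff ℝ (⊤ : ℕ∞) (h μ ν))
    (hsymm : ∀ μ ν, h μ ν = h ν μ) :
    ∀ μ ν : Fin n, lovelockG k h μ ν = lovelockG k h ν μ := by
  
  intro μ ν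
  unfold lovelockG
  congr 1
  rw [Finset.sum_comm]
  refine Finset.sum_congr rfl fun ρ _ => Finset.sum_congr rfl fun σ _ => ?_
  rw [gdelta_symm]
  congr 1
  exact Finset.prod_congr rfl fun i _ => Kt_pairSymm h hsmooth hsymm _ _ _ _
end

section
/- The antisymmetrized ghost derivative H_{μν} := ∂_μ C_ν − ∂_ν C_μ is γ₀-closed, and every second or higher derivative of the ghost is γ₀-exact: ∂_ρ∂_{σ₁}…∂_{σ_s} C_μ with s ≥ 1 lies in the image of γ₀ acting on the algebra generated by h and its derivatives. -/
/-- Generator symbols ∂_{ρ₁…ρ_s} h_{μν}: a multiset of derivative indices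
(derivatives commute) together with the two symmetric-tensor indices. -/
abbrev HGen (n : ℕ) := Multiset (Fin n) × Fin n × Fin n

/-- Generator symbols ∂_{ρ₁…ρ_s} C_μ for the diffeomorphism ghost. -/
abbrev CGen (n : ℕ) := Multiset (Fin n) × Fin n

/-- The ℝ-linear span of the generators h, C and their derivatives. Since γ₀ is
extended to the free graded-commutative algebra as an odd derivation commuting
with ∂, its square γ₀² is an (even) derivation, and hence γ₀² = 0 on the whole
algebra iff γ₀² vanishes on this span of generators. -/
abbrev GenSpan (n : ℕ) := (HGen n ⊕ CGen n) →₀ ℝ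

/-- The linearized BRST differential γ₀ on generators:
γ₀ ∂_D h_{μν} = ∂_D ∂_μ C_ν + ∂_D ∂_ν C_μ and γ₀ ∂_D C_μ = 0,
extended ℝ-linearly. -/
noncomputable def gammaZero (n : ℕ) : GenSpan n →ₗ[ℝ] GenSpan n :=
  Finsupp.lsum ℝ fun g =>
    match g with
    | Sum.inl (D, μ, ν) =>
        LinearMap.toSpanSingleton ℝ (GenSpan n)
          (Finsupp.single (Sum.inr (μ ::ₘ D, ν)) 1 + Finsupp.single (Sum.inr (ν ::ₘ D, μ)) 1)
    | Sum.inr _ => 0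

/-- The antisymmetrized ghost derivative H_{μν} = ∂_μ C_ν − ∂_ν C_μ. -/
noncomputable def Hghost {n : ℕ} (μ ν : Fin n) : GenSpan n :=
  Finsupp.single (Sum.inr ({μ}, ν)) 1 - Finsupp.single (Sum.inr ({ν}, μ)) 1

/-!
γ₀ kills every ghost generator, so `H_{μν}` is closed. For exactness, write a derivative
multi-index with at least two entries as `σ ρ D`; then γ₀ maps `∂_D Γ_{σρμ}`, a derivative of the
linearized Christoffel symbol, onto `∂_σ ∂_ρ ∂_D C_μ`: the terms `∂_D ∂_μ ∂_σ C_ρ` and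
`∂_D ∂_μ ∂_ρ C_σ` cancel because derivatives commute.
-/

theorem Multiset.exists_eq_cons_cons_of_two_le_card {α : Type*} {s : Multiset α}
    (hs : 2 ≤ Multiset.card s) : ∃ a b t, s = a ::ₘ b ::ₘ t := by
  obtain ⟨a, ha⟩ := Multiset.card_pos_iff_exists_mem.mp (by omega : 0 < Multiset.card s)
  obtain ⟨t, rfl⟩ := Multiset.exists_cons_of_mem ha
  obtain ⟨b, hb⟩ := Multiset.card_pos_iff_exists_mem.mp
    (by rw [Multiset.card_cons] at hs; omega : 0 < Multiset.card t)
  obtain ⟨u, rfl⟩ := Multiset.exists_cons_of_mem hb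
  exact ⟨a, b, u, rfl⟩

namespace GenSpan

variable {n : ℕ}

noncomputable abbrev h (D : Multiset (Fin n)) (μ ν : Fin n) : GenSpan n :=
  Finsupp.single (Sum.inl (D, μ, ν)) 1

noncomputable abbrev C (D : Multiset (Fin n)) (μ : Fin n) : GenSpan n :=
  Finsupp.single (Sum.inr (D, μ)) 1

/-- `∂_D Γ_{σρμ}`, a derivative of the linearized Christoffel symbol. -/
noncomputable def christoffel (D : Multiset (Fin n)) (σ ρ μ : Fin n) : GenSpan n :=
  (1 / 2 : ℝ) • (h (σ ::ₘ D) ρ μ + h (ρ ::ₘ D) σ μ - h (μ ::ₘ D) σ ρ)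

theorem gammaZero_h (D : Multiset (Fin n)) (μ ν : Fin n) :
    gammaZero n (h D μ ν) = C (μ ::ₘ D) ν + C (ν ::ₘ D) μ := by
  simp [gammaZero]

theorem gammaZero_C (D : Multiset (Fin n)) (μ : Fin n) : gammaZero n (C D μ) = 0 := by
  simp [gammaZero]

theorem gammaZero_Hghost (μ ν : Fin n) : gammaZero n (Hghost μ ν) = 0 := by
  rw [Hghost, map_sub, gammaZero_C, gammaZero_C, sub_zero]

theorem gammaZero_christoffel (D : Multiset (Fin n)) (σ ρ μ : Fin n) :
    gammaZero n (christoffel D σ ρ μ) = C (σ ::ₘ ρ ::ₘ D) μ := by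
  simp only [christoffel, map_smul, map_add, map_sub, gammaZero_h]
  rw [Multiset.cons_swap ρ σ D, Multiset.cons_swap μ σ D, Multiset.cons_swap μ ρ D]
  module

theorem C_mem_range_gammaZero {D : Multiset (Fin n)} (hD : 2 ≤ Multiset.card D) (μ : Fin n) :
    C D μ ∈ LinearMap.range (gammaZero n) := by
  obtain ⟨σ, ρ, D', rfl⟩ := Multiset.exists_eq_cons_cons_of_two_le_card hD
  exact ⟨christoffel D' σ ρ μ, gammaZero_christoffel D' σ ρ μ⟩

end GenSpan

/-- H_{μν} = ∂_μC_ν − ∂_νC_μ is γ₀-closed, and every second or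
higher derivative of the ghost, ∂_{ρ₁…ρ_s}∂_ρ C_μ with s ≥ 1, is γ₀-exact
(e.g. ∂_σ∂_ρ C_μ = γ₀ Γ_{σρμ} with Γ_{σρμ} = (1/2)(∂_σh_{ρμ} + ∂_ρh_{σμ} − ∂_μh_{σρ})). -/
theorem Hghost_closed_and_higher_derivatives_exact (n : ℕ) :
    (∀ μ ν : Fin n, gammaZero n (Hghost μ ν) = 0) ∧
    (∀ (D : Multiset (Fin n)) (μ : Fin n), 2 ≤ Multiset.card D →
      (Finsupp.single (Sum.inr (D, μ)) (1 : ℝ) : GenSpan n) ∈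
        LinearMap.range (gammaZero n)) :=
  ⟨GenSpan.gammaZero_Hghost, fun _ μ hD => GenSpan.C_mem_range_gammaZero hD μ⟩
end
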